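/- (Proposition 1: Optimal solution for g₀ and g₁.) Let (Ω, P) carry X : Ω → 𝒳 (standard Borel), a treatment indicator T : Ω → {0,1}, potential outcomes Y₀, Y₁ : Ω → ℝ, and observed outcome Y = Y₁ on {T = 1} and Y = Y₀ on {T = 0} (consistency). Assume ignorability: (Y₀, Y₁) is conditionally independent of T given X; and positivity: there is a measurable e : 𝒳 → [0,1] with P(T = 1 | X) = e(X) a.s. and 0 < e(x) < 1 for μ_X-a.e. x, where μ_X is the law of X. Let Z be a real random variable with law ν, independent of (X, T, Y₀, Y₁), and let F_t(x, z) be the conditional CDF of Y_t given X = x. Then for all jointly measurable g₀, g₁ : ℝ × 𝒳 → (0,1), the loss g-loss*(g₀, g₁) := E[1_{T=0}·ℓ(1_{Y ≤ Z}, g₀(Z, X))] + E[1_{T=1}·ℓ(1_{Y ≤ Z}, g₁(Z, X))] satisfies g-loss*(g₀, g₁) ≥ E[1_{T=0}·H(F₀(X, Z))] + E[1_{T=1}·H(F₁(X, Z))], and any pair (g₀, g₁) attaining this infimum satisfies g₀(z, x) = F₀(x, z) and g₁(z, x) = F₁(x, z) for ν ⊗ μ_X-almost every (z, x), i.e. almost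 everywhere on the full covariate distribution, not merely on the respective treatment subpopulations. -/

import Mathlib

open MeasureTheory ProbabilityTheory
open scoped ENNReal

/-- Binary cross-entropy loss `ℓ(t, p) = −(t·log p + (1 − t)·log(1 − p))`. -/
noncomputable def bce (t p : ℝ) : ℝ := -(t * Real.log p + (1 - t) * Real.log (1 - p))

/-- Binary entropy `H(a) = −(a·log a + (1 − a)·log(1 − a))` (`0·log 0 = 0` automatic). -/
noncomputable def binEntropy' (a : ℝ) : ℝ := -(a * Real.log a + (1 - a) * Real.log (1 - a))

/-- The group-`t` g-loss term `E[1_{T = t} · ℓ(1_{Y ≤ Z}, g(Z, X))]`. -/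
noncomputable def groupLoss {Ω 𝓧 : Type*} [MeasurableSpace Ω] (P : Measure Ω)
    (X : Ω → 𝓧) (T : Ω → Bool) (Y Z : Ω → ℝ) (t : Bool) (g : ℝ × 𝓧 → ℝ) : ℝ≥0∞ :=
  ∫⁻ ω, ENNReal.ofReal
    ((if T ω = t then 1 else 0) * bce (if Y ω ≤ Z ω then 1 else 0) (g (Z ω, X ω))) ∂P

/-- The group-`t` entropy term `E[1_{T = t} · H(F(X, Z))]`. -/
noncomputable def groupEntropy {Ω 𝓧 : Type*} [MeasurableSpace Ω] (P : Measure Ω)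
    (X : Ω → 𝓧) (T : Ω → Bool) (Z : Ω → ℝ) (t : Bool) (F : 𝓧 → ℝ → ℝ) : ℝ≥0∞ :=
  ∫⁻ ω, ENNReal.ofReal ((if T ω = t then 1 else 0) * binEntropy' (F (X ω) (Z ω))) ∂P

/-!
Once we condition on `X`, the independence of `Z` turns both sides into integrals over `ν ⊗ μ_X`.
Write `e₁ = e`, `e₀ = 1 - e`. Ignorability gives `P(T = t, Y_t ≤ z | X) = e_t(X) · F_t(X, z)`, and
`ℓ(·, p)` is affine in the label, so the group-`t` loss is `∫ e_t(x) · ℓ(F_t(x, z), g_t(z, x))`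
while the group-`t` entropy term is `∫ e_t(x) · H(F_t(x, z))`. Gibbs' inequality
`H(a) ≤ ℓ(a, p)`, strict unless `p = a`, compares the integrands pointwise. If the total loss
attains the finite bound, each group attains its own bound, its integrands agree a.e., and
`e_t > 0` forces `g_t = F_t` a.e. for `ν ⊗ μ_X`.
-/

open Set

lemma mul_log_sub_log_eq {c q : ℝ} (hq : 0 < q) :
    c * (Real.log c - Real.log q) = q * (c / q * Real.log (c / q)) := by
  rcases eq_or_ne c 0 with rfl | hc
  · simp
  · rw [Real.log_div hc hq.ne']
    field_simp

lemma sub_le_mul_log_sub_log {c q : ℝ} (hc : 0 ≤ c) (hq : 0 < q) :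
    c - q ≤ c * (Real.log c - Real.log q) := by
  have := mul_le_mul_of_nonneg_left (Real.self_sub_one_le_mul_log (div_nonneg hc hq.le)) hq.le
  rw [mul_log_sub_log_eq hq]
  rwa [mul_sub, mul_div_cancel₀ _ hq.ne', mul_one] at this

lemma sub_lt_mul_log_sub_log {c q : ℝ} (hc : 0 ≤ c) (hq : 0 < q) (hcq : c ≠ q) :
    c - q < c * (Real.log c - Real.log q) := by
  have hne : c / q ≠ 1 := fun h => hcq ((div_eq_one_iff_eq hq.ne').mp h)
  have := mul_lt_mul_of_pos_left (Real.self_sub_one_lt_mul_log (div_nonneg hc hq.le) hne) hq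
  rw [mul_log_sub_log_eq hq]
  rwa [mul_sub, mul_div_cancel₀ _ hq.ne', mul_one] at this

lemma bce_sub_binEntropy' (a p : ℝ) : bce a p - binEntropy' a =
    a * (Real.log a - Real.log p) + (1 - a) * (Real.log (1 - a) - Real.log (1 - p)) := by
  unfold bce binEntropy'
  ring

lemma binEntropy'_le_bce {a p : ℝ} (ha : a ∈ Icc (0 : ℝ) 1) (hp : p ∈ Ioo (0 : ℝ) 1) :
    binEntropy' a ≤ bce a p := by
  have h₁ := sub_le_mul_log_sub_log ha.1 hp.1
  have h₀ := sub_le_mul_log_sub_log (sub_nonneg.mpr ha.2) (sub_pos.mpr hp.2)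
  linarith [bce_sub_binEntropy' a p]

lemma binEntropy'_lt_bce {a p : ℝ} (ha : a ∈ Icc (0 : ℝ) 1) (hp : p ∈ Ioo (0 : ℝ) 1)
    (hap : a ≠ p) : binEntropy' a < bce a p := by
  have h₁ := sub_lt_mul_log_sub_log ha.1 hp.1 hap
  have h₀ := sub_le_mul_log_sub_log (sub_nonneg.mpr ha.2) (sub_pos.mpr hp.2)
  linarith [bce_sub_binEntropy' a p]

lemma binEntropy'_eq_binEntropy (a : ℝ) : binEntropy' a = Real.binEntropy a := by
  simp only [binEntropy', Real.binEntropy, Real.log_inv]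
  ring

lemma binEntropy'_nonneg {a : ℝ} (ha : a ∈ Icc (0 : ℝ) 1) : 0 ≤ binEntropy' a :=
  binEntropy'_eq_binEntropy a ▸ Real.binEntropy_nonneg ha.1 ha.2

lemma bce_nonneg {a p : ℝ} (ha : a ∈ Icc (0 : ℝ) 1) (hp : p ∈ Ioo (0 : ℝ) 1) : 0 ≤ bce a p :=
  (binEntropy'_nonneg ha).trans (binEntropy'_le_bce ha hp)

lemma ofReal_mul_bce_one_add_ofReal_mul_bce_zero {a w p : ℝ} (ha : a ∈ Icc (0 : ℝ) 1)
    (hw : 0 ≤ w) (hp : p ∈ Ioo (0 : ℝ) 1) :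
    ENNReal.ofReal (a * w) * ENNReal.ofReal (bce 1 p)
      + ENNReal.ofReal ((1 - a) * w) * ENNReal.ofReal (bce 0 p)
      = ENNReal.ofReal (w * bce a p) := by
  have h₁ : 0 ≤ a * w := mul_nonneg ha.1 hw
  have h₀ : 0 ≤ (1 - a) * w := mul_nonneg (sub_nonneg.mpr ha.2) hw
  rw [← ENNReal.ofReal_mul h₁, ← ENNReal.ofReal_mul h₀, ← ENNReal.ofReal_add
    (mul_nonneg h₁ (bce_nonneg ⟨zero_le_one, le_rfl⟩ hp))
    (mul_nonneg h₀ (bce_nonneg ⟨le_rfl, zero_le_one⟩ hp))]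
  congr 1
  simp only [bce]
  ring

@[fun_prop]
lemma Measurable.bce {α : Type*} [MeasurableSpace α] {f g : α → ℝ} (hf : Measurable f)
    (hg : Measurable g) : Measurable fun x => bce (f x) (g x) := by
  unfold _root_.bce
  fun_prop

@[fun_prop]
lemma Measurable.binEntropy' {α : Type*} [MeasurableSpace α] {f : α → ℝ} (hf : Measurable f) :
    Measurable fun x => binEntropy' (f x) := by
  unfold _root_.binEntropy'
  fun_prop

lemma ENNReal.le_and_le_of_add_eq_add {a b c d : ℝ≥0∞} (hac : a ≤ c) (hbd : b ≤ d)
    (hfin : a + b ≠ ⊤) (h : c + d = a + b) : c ≤ a ∧ d ≤ b := by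
  have hcd : c + d ≠ ⊤ := h ▸ hfin
  exact ⟨ENNReal.le_of_add_le_add_right (ENNReal.add_ne_top.mp hcd).2
      (h.trans_le (add_le_add_right hbd a)),
    ENNReal.le_of_add_le_add_left (ENNReal.add_ne_top.mp hcd).1
      (h.trans_le (add_le_add_left hac b))⟩

section Weighted

variable {α : Type*} [MeasurableSpace α] {μ : Measure α} {w a p : α → ℝ}

lemma ofReal_mul_binEntropy'_ae_le_ofReal_mul_bce (hw : ∀ᵐ x ∂μ, 0 ≤ w x)
    (ha : ∀ x, a x ∈ Icc (0 : ℝ) 1) (hp : ∀ x, p x ∈ Ioo (0 : ℝ) 1) :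
    (fun x => ENNReal.ofReal (w x * binEntropy' (a x)))
      ≤ᵐ[μ] fun x => ENNReal.ofReal (w x * bce (a x) (p x)) :=
  hw.mono fun x hx =>
    ENNReal.ofReal_le_ofReal (mul_le_mul_of_nonneg_left (binEntropy'_le_bce (ha x) (hp x)) hx)

lemma ae_eq_of_lintegral_bce_le_lintegral_binEntropy' (hw_meas : Measurable w)
    (ha_meas : Measurable a) (hp_meas : Measurable p) (hw : ∀ᵐ x ∂μ, 0 < w x)
    (ha : ∀ x, a x ∈ Icc (0 : ℝ) 1) (hp : ∀ x, p x ∈ Ioo (0 : ℝ) 1)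
    (hfin : ∫⁻ x, ENNReal.ofReal (w x * binEntropy' (a x)) ∂μ ≠ ⊤)
    (hle : ∫⁻ x, ENNReal.ofReal (w x * bce (a x) (p x)) ∂μ
      ≤ ∫⁻ x, ENNReal.ofReal (w x * binEntropy' (a x)) ∂μ) :
    p =ᵐ[μ] a := by
  have heq := ae_eq_of_ae_le_of_lintegral_le
    (ofReal_mul_binEntropy'_ae_le_ofReal_mul_bce (hw.mono fun _ => le_of_lt) ha hp) hfin
    (by fun_prop) hle
  filter_upwards [heq, hw] with x hx hwx
  by_contra hne
  have hlt := mul_lt_mul_of_pos_left (binEntropy'_lt_bce (ha x) (hp x) (Ne.symm hne)) hwx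
  rw [ENNReal.ofReal_eq_ofReal_iff (mul_nonneg hwx.le (binEntropy'_nonneg (ha x)))
    (mul_nonneg hwx.le (bce_nonneg (ha x) (hp x)))] at hx
  exact hlt.ne hx

end Weighted

-- `condCDF ρ b x` is the mass of `Iic x` under the kernel `b ↦ (condCDF ρ b).measure`, and a
-- kernel measures the sections of a measurable set measurably.
@[fun_prop]
lemma measurable_condCDF_uncurry {β : Type*} [MeasurableSpace β] (ρ : Measure (β × ℝ)) :
    Measurable fun q : β × ℝ => condCDF ρ q.1 q.2 := by
  let κ : Kernel β ℝ := ⟨fun b => (condCDF ρ b).measure, measurable_measure_condCDF ρ⟩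
  have : IsMarkovKernel κ := ⟨fun b => instIsProbabilityMeasureCondCDF ρ b⟩
  have hmeas := Kernel.measurable_kernel_prodMk_left (κ := κ.prodMkRight ℝ)
    (measurableSet_le measurable_snd (measurable_snd.comp measurable_fst))
  convert hmeas.ennreal_toReal using 2 with q
  have hIic : Prod.mk q ⁻¹' {r : (β × ℝ) × ℝ | r.2 ≤ (Prod.snd ∘ Prod.fst) r} = Iic q.2 := rfl
  rw [Kernel.prodMkRight_apply, hIic]
  simp [κ, measure_condCDF_Iic, condCDF_nonneg]

section CondExp

variable {Ω 𝓧 : Type*} [mΩ : MeasurableSpace Ω] [m𝓧 : MeasurableSpace 𝓧] {P : Measure Ω}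
  [IsFiniteMeasure P] {X : Ω → 𝓧}

lemma condExp_indicator_compl {m : MeasurableSpace Ω} (hm : m ≤ mΩ)
    {s : Set Ω} (hs : MeasurableSet[mΩ] s) :
    P⟦sᶜ | m⟧ =ᵐ[P] fun ω => 1 - (P⟦s | m⟧) ω := by
  rw [indicator_compl]
  filter_upwards [condExp_sub (μ := P) (integrable_const (1 : ℝ))
    ((integrable_const 1).indicator hs) m] with ω hω
  rw [hω, Pi.sub_apply, condExp_const hm]

lemma condExp_indicator_preimage_Iic (hX : Measurable X) {W : Ω → ℝ}
    (hW : Measurable W) (z : ℝ) :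
    P⟦W ⁻¹' Iic z | m𝓧.comap X⟧
      =ᵐ[P] fun ω => condCDF (P.map fun ω => (X ω, W ω)) (X ω) z := by
  set ρ := P.map fun ω => (X ω, W ω)
  have hρ : ρ.fst = P.map X := Measure.fst_map_prodMk hW
  have hF : Measurable fun x => condCDF ρ x z := measurable_condCDF ρ z
  have hFX_int : Integrable (fun ω => condCDF ρ (X ω) z) P :=
    (integrable_map_measure hF.aestronglyMeasurable hX.aemeasurable).mp
      (hρ ▸ integrable_condCDF ρ z)
  refine (ae_eq_condExp_of_forall_setIntegral_eq hX.comap_le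
    ((integrable_const 1).indicator (hW measurableSet_Iic)) (fun _ _ _ => hFX_int.integrableOn)
    ?_ (hF.comp (comap_measurable X)).aestronglyMeasurable).symm
  rintro _ ⟨s, hs, rfl⟩ -
  rw [setIntegral_indicator (hW measurableSet_Iic), setIntegral_const, smul_eq_mul, mul_one,
    ← setIntegral_map hs hF.aestronglyMeasurable hX.aemeasurable, ← hρ,
    setIntegral_condCDF ρ z hs, measureReal_def, measureReal_def,
    Measure.map_apply (hX.prodMk hW) (hs.prod measurableSet_Iic)]
  rfl

lemma map_restrict_eq_withDensity_of_condExp (hX : Measurable X)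
    {C : Set Ω} (hC : MeasurableSet C) {φ : 𝓧 → ℝ} (hφ : Measurable φ)
    (hcond : P⟦C | m𝓧.comap X⟧ =ᵐ[P] fun ω => φ (X ω)) :
    (P.restrict C).map X = (P.map X).withDensity fun x => ENNReal.ofReal (φ x) := by
  ext s hs
  have hXs : MeasurableSet[m𝓧.comap X] (X ⁻¹' s) := ⟨s, hs, rfl⟩
  have hint : Integrable (C.indicator fun _ => (1 : ℝ)) P := (integrable_const 1).indicator hC
  rw [Measure.map_apply hX hs, Measure.restrict_apply (hX hs), withDensity_apply _ hs,
    setLIntegral_map hs (by fun_prop) hX,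
    lintegral_congr_ae (ae_restrict_of_ae (hcond.mono fun ω hω => congrArg ENNReal.ofReal hω.symm)),
    ← ofReal_integral_eq_lintegral_ofReal integrable_condExp.integrableOn
      (ae_restrict_of_ae (condExp_nonneg (Filter.Eventually.of_forall fun ω => ?_))),
    setIntegral_condExp hX.comap_le hint hXs, setIntegral_indicator hC, setIntegral_const,
    smul_eq_mul, mul_one, measureReal_def, ENNReal.ofReal_toReal (measure_ne_top _ _)]
  exact indicator_nonneg (fun _ _ => zero_le_one) ω

lemma setLIntegral_comp_eq_lintegral_mul_of_condExp (hX : Measurable X)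
    {C : Set Ω} (hC : MeasurableSet C) {φ : 𝓧 → ℝ} (hφ : Measurable φ)
    (hcond : P⟦C | m𝓧.comap X⟧ =ᵐ[P] fun ω => φ (X ω)) {ψ : 𝓧 → ℝ≥0∞} (hψ : Measurable ψ) :
    ∫⁻ ω in C, ψ (X ω) ∂P = ∫⁻ x, ENNReal.ofReal (φ x) * ψ x ∂(P.map X) := by
  rw [← lintegral_map hψ hX, map_restrict_eq_withDensity_of_condExp hX hC hφ hcond,
    lintegral_withDensity_eq_lintegral_mul _ (by fun_prop) hψ]
  rfl

lemma ProbabilityTheory.IndepFun.lintegral_comp_eq_lintegral_lintegral {β γ : Type*}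
    [MeasurableSpace β] [MeasurableSpace γ] {W : Ω → β} {Z : Ω → γ} (hWZ : IndepFun W Z P)
    (hW : Measurable W) (hZ : Measurable Z) {h : γ × β → ℝ≥0∞} (hh : Measurable h) :
    ∫⁻ ω, h (Z ω, W ω) ∂P = ∫⁻ z, ∫⁻ ω, h (z, W ω) ∂P ∂(P.map Z) := by
  rw [← lintegral_map hh (hZ.prodMk hW),
    (indepFun_iff_map_prod_eq_prod_map_map hZ.aemeasurable hW.aemeasurable).mp hWZ.symm,
    lintegral_prod _ hh.aemeasurable]
  refine lintegral_congr fun z => lintegral_map (hh.comp measurable_prodMk_left) hW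

end CondExp

def armPropensity {𝓧 : Type*} (e : 𝓧 → ℝ) : Bool → 𝓧 → ℝ
  | true, x => e x
  | false, x => 1 - e x

lemma armPropensity_mem_Icc {𝓧 : Type*} {e : 𝓧 → ℝ} {x : 𝓧} (hx : e x ∈ Icc (0 : ℝ) 1)
    (t : Bool) :
    armPropensity e t x ∈ Icc (0 : ℝ) 1 := by
  cases t <;> simp only [armPropensity] <;> constructor <;> linarith [hx.1, hx.2]

lemma armPropensity_pos {𝓧 : Type*} {e : 𝓧 → ℝ} {x : 𝓧} (hx : e x ∈ Ioo (0 : ℝ) 1)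
    (t : Bool) :
    0 < armPropensity e t x := by
  cases t <;> simp only [armPropensity] <;> linarith [hx.1, hx.2]

section Treatment

variable {Ω 𝓧 : Type*} [mΩ : MeasurableSpace Ω] [m𝓧 : MeasurableSpace 𝓧] {P : Measure Ω}
  [IsFiniteMeasure P] {X : Ω → 𝓧} {T : Ω → Bool} {e : 𝓧 → ℝ}

@[fun_prop]
lemma measurable_armPropensity (he : Measurable e) (t : Bool) :
    Measurable (armPropensity e t) := by
  cases t
  · exact measurable_const.sub he
  · exact he

lemma condExp_indicator_treatment (hX : Measurable X) (hT : Measurable T)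
    (heX : P[fun ω => (if T ω then (1 : ℝ) else 0) | m𝓧.comap X] =ᵐ[P] fun ω => e (X ω))
    (t : Bool) :
    P⟦T ⁻¹' {t} | m𝓧.comap X⟧ =ᵐ[P] fun ω => armPropensity e t (X ω) := by
  have htrue : (T ⁻¹' {true}).indicator (fun _ => (1 : ℝ)) = fun ω => if T ω then 1 else 0 := by
    funext ω
    simp [indicator]
  cases t with
  | true => simpa [armPropensity, htrue] using heX
  | false =>
    have hcompl : T ⁻¹' {false} = (T ⁻¹' {true})ᶜ := by ext; simp
    rw [hcompl]
    filter_upwards [condExp_indicator_compl hX.comap_le (hT (measurableSet_singleton true)),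
      htrue ▸ heX] with ω h₁ h₂
    rw [h₁, h₂]
    rfl

lemma condExp_indicator_inter_treatment [StandardBorelSpace Ω] (hX : Measurable X)
    (hT : Measurable T) {V : Ω → ℝ} (hV : Measurable V)
    (hig : CondIndepFun (m𝓧.comap X) hX.comap_le V T P)
    (heX : P[fun ω => (if T ω then (1 : ℝ) else 0) | m𝓧.comap X] =ᵐ[P] fun ω => e (X ω))
    {B : Set ℝ} (hB : MeasurableSet B) {φ : 𝓧 → ℝ}
    (hφ : P⟦V ⁻¹' B | m𝓧.comap X⟧ =ᵐ[P] fun ω => φ (X ω)) (t : Bool) :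
    P⟦V ⁻¹' B ∩ T ⁻¹' {t} | m𝓧.comap X⟧
      =ᵐ[P] fun ω => φ (X ω) * armPropensity e t (X ω) := by
  filter_upwards [(condIndepFun_iff_condExp_inter_preimage_eq_mul hV hT).mp hig B {t} hB
    (measurableSet_singleton t), hφ, condExp_indicator_treatment hX hT heX t] with ω h h₁ h₂
  rw [h, h₁, h₂]

lemma groupEntropy_eq_lintegral_prod (hX : Measurable X) (hT : Measurable T) {Z : Ω → ℝ}
    (hZ : Measurable Z) (hindep : IndepFun (fun ω => (X ω, T ω)) Z P) (he : Measurable e)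
    (heX : P[fun ω => (if T ω then (1 : ℝ) else 0) | m𝓧.comap X] =ᵐ[P] fun ω => e (X ω))
    (he01 : ∀ᵐ x ∂(P.map X), e x ∈ Icc (0 : ℝ) 1) (t : Bool) {F : 𝓧 → ℝ → ℝ}
    (hF : Measurable fun q : 𝓧 × ℝ => F q.1 q.2) :
    groupEntropy P X T Z t F = ∫⁻ p, ENNReal.ofReal (armPropensity e t p.2
      * binEntropy' (F p.2 p.1)) ∂((P.map Z).prod (P.map X)) := by
  let h : ℝ × 𝓧 × Bool → ℝ≥0∞ := fun q =>
    ENNReal.ofReal ((if q.2.2 = t then 1 else 0) * binEntropy' (F q.2.1 q.1))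
  have hh : Measurable h := by
    refine ENNReal.measurable_ofReal.comp (Measurable.mul ?_ (by fun_prop))
    exact Measurable.ite (measurable_snd.comp measurable_snd (measurableSet_singleton t))
      measurable_const measurable_const
  have hT_t : MeasurableSet (T ⁻¹' {t}) := hT (measurableSet_singleton t)
  change ∫⁻ ω, h (Z ω, X ω, T ω) ∂P = _
  rw [hindep.lintegral_comp_eq_lintegral_lintegral (by fun_prop) hZ hh,
    lintegral_prod _ (by fun_prop)]
  refine lintegral_congr fun z => ?_
  have hind : ∀ ω, h (z, X ω, T ω)
      = (T ⁻¹' {t}).indicator (fun ω => ENNReal.ofReal (binEntropy' (F (X ω) z))) ω := by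
    intro ω
    by_cases ht : T ω = t <;> simp [h, indicator, ht]
  rw [lintegral_congr hind, lintegral_indicator hT_t,
    setLIntegral_comp_eq_lintegral_mul_of_condExp hX hT_t (measurable_armPropensity he t)
      (condExp_indicator_treatment hX hT heX t)
      (ψ := fun x => ENNReal.ofReal (binEntropy' (F x z))) (by fun_prop)]
  exact lintegral_congr_ae <| he01.mono fun x hx =>
    (ENNReal.ofReal_mul (armPropensity_mem_Icc hx t).1).symm

end Treatment

section Arm

variable {Ω 𝓧 : Type*} [mΩ : MeasurableSpace Ω] [StandardBorelSpace Ω] [m𝓧 : MeasurableSpace 𝓧]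
  {P : Measure Ω} [IsFiniteMeasure P] {X : Ω → 𝓧} {T : Ω → Bool} {e : 𝓧 → ℝ}

lemma lintegral_ofReal_ite_mul_bce_eq_lintegral_condCDF (hX : Measurable X) (hT : Measurable T)
    {V : Ω → ℝ} (hV : Measurable V) (hig : CondIndepFun (m𝓧.comap X) hX.comap_le V T P)
    (he : Measurable e)
    (heX : P[fun ω => (if T ω then (1 : ℝ) else 0) | m𝓧.comap X] =ᵐ[P] fun ω => e (X ω))
    (he01 : ∀ᵐ x ∂(P.map X), e x ∈ Icc (0 : ℝ) 1) (t : Bool) (z : ℝ) {q : 𝓧 → ℝ}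
    (hq : Measurable q) (hq01 : ∀ x, q x ∈ Ioo (0 : ℝ) 1) :
    ∫⁻ ω, ENNReal.ofReal ((if T ω = t then 1 else 0) * bce (if V ω ≤ z then 1 else 0) (q (X ω))) ∂P
      = ∫⁻ x, ENNReal.ofReal (armPropensity e t x
          * bce (condCDF (P.map fun ω => (X ω, V ω)) x z) (q x)) ∂(P.map X) := by
  set F := condCDF (P.map fun ω => (X ω, V ω))
  have hF : Measurable fun x => F x z := measurable_condCDF _ z
  have hcondF := condExp_indicator_preimage_Iic (P := P) hX hV z
  have hle : P⟦V ⁻¹' Iic z ∩ T ⁻¹' {t} | m𝓧.comap X⟧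
      =ᵐ[P] fun ω => F (X ω) z * armPropensity e t (X ω) :=
    condExp_indicator_inter_treatment hX hT hV hig heX measurableSet_Iic
      (φ := fun x => F x z) hcondF t
  have hgt : P⟦V ⁻¹' (Iic z)ᶜ ∩ T ⁻¹' {t} | m𝓧.comap X⟧
      =ᵐ[P] fun ω => (1 - F (X ω) z) * armPropensity e t (X ω) := by
    refine condExp_indicator_inter_treatment hX hT hV hig heX measurableSet_Iic.compl
      (φ := fun x => 1 - F x z) ?_ t
    filter_upwards [condExp_indicator_compl hX.comap_le (hV measurableSet_Iic), hcondF]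
      with ω h₁ h₂
    rw [preimage_compl, h₁, h₂]
  have hmeas_le : MeasurableSet (V ⁻¹' Iic z ∩ T ⁻¹' {t}) :=
    (hV measurableSet_Iic).inter (hT (measurableSet_singleton t))
  have hmeas_gt : MeasurableSet (V ⁻¹' (Iic z)ᶜ ∩ T ⁻¹' {t}) :=
    (hV measurableSet_Iic.compl).inter (hT (measurableSet_singleton t))
  have hsplit : ∀ ω, ENNReal.ofReal
      ((if T ω = t then 1 else 0) * bce (if V ω ≤ z then 1 else 0) (q (X ω)))
      = (V ⁻¹' Iic z ∩ T ⁻¹' {t}).indicator (fun ω => ENNReal.ofReal (bce 1 (q (X ω)))) ω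
        + (V ⁻¹' (Iic z)ᶜ ∩ T ⁻¹' {t}).indicator
            (fun ω => ENNReal.ofReal (bce 0 (q (X ω)))) ω := by
    intro ω
    by_cases ht : T ω = t <;> by_cases hz : V ω ≤ z <;> simp [indicator, ht, hz, lt_iff_not_ge]
  rw [lintegral_congr hsplit, lintegral_add_left ((by fun_prop : Measurable fun ω =>
      ENNReal.ofReal (bce 1 (q (X ω)))).indicator hmeas_le),
    lintegral_indicator hmeas_le, lintegral_indicator hmeas_gt,
    setLIntegral_comp_eq_lintegral_mul_of_condExp hX hmeas_le
      (hF.mul (measurable_armPropensity he t)) hle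
      (ψ := fun x => ENNReal.ofReal (bce 1 (q x))) (by fun_prop),
    setLIntegral_comp_eq_lintegral_mul_of_condExp hX hmeas_gt
      ((measurable_const.sub hF).mul (measurable_armPropensity he t)) hgt
      (ψ := fun x => ENNReal.ofReal (bce 0 (q x))) (by fun_prop),
    ← lintegral_add_left (by fun_prop)]
  exact lintegral_congr_ae <| he01.mono fun x hx =>
    ofReal_mul_bce_one_add_ofReal_mul_bce_zero ⟨condCDF_nonneg _ _ _, condCDF_le_one _ _ _⟩
      (armPropensity_mem_Icc hx t).1 (hq01 x)

lemma groupLoss_eq_lintegral_prod (hX : Measurable X) (hT : Measurable T) {Y V Z : Ω → ℝ}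
    (hV : Measurable V) (hZ : Measurable Z) {t : Bool} (hcons : ∀ ω, T ω = t → Y ω = V ω)
    (hig : CondIndepFun (m𝓧.comap X) hX.comap_le V T P)
    (hindep : IndepFun (fun ω => (X ω, T ω, V ω)) Z P) (he : Measurable e)
    (heX : P[fun ω => (if T ω then (1 : ℝ) else 0) | m𝓧.comap X] =ᵐ[P] fun ω => e (X ω))
    (he01 : ∀ᵐ x ∂(P.map X), e x ∈ Icc (0 : ℝ) 1) {g : ℝ × 𝓧 → ℝ} (hg : Measurable g)
    (hg01 : ∀ p, g p ∈ Ioo (0 : ℝ) 1) :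
    groupLoss P X T Y Z t g = ∫⁻ p, ENNReal.ofReal (armPropensity e t p.2
      * bce (condCDF (P.map fun ω => (X ω, V ω)) p.2 p.1) (g p)) ∂((P.map Z).prod (P.map X)) := by
  let h : ℝ × 𝓧 × Bool × ℝ → ℝ≥0∞ := fun q => ENNReal.ofReal
    ((if q.2.2.1 = t then 1 else 0) * bce (if q.2.2.2 ≤ q.1 then 1 else 0) (g (q.1, q.2.1)))
  have hh : Measurable h := by
    refine ENNReal.measurable_ofReal.comp (Measurable.mul ?_ (Measurable.bce ?_ (by fun_prop)))
    · exact Measurable.ite (measurable_fst.comp (measurable_snd.comp measurable_snd)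
        (measurableSet_singleton t)) measurable_const measurable_const
    · exact Measurable.ite (measurableSet_le (by fun_prop) measurable_fst) measurable_const
        measurable_const
  have hloss : groupLoss P X T Y Z t g = ∫⁻ ω, h (Z ω, X ω, T ω, V ω) ∂P := by
    refine lintegral_congr fun ω => ?_
    by_cases ht : T ω = t
    · simp [h, ht, hcons ω ht]
    · simp [h, ht]
  rw [hloss, hindep.lintegral_comp_eq_lintegral_lintegral (by fun_prop) hZ hh,
    lintegral_prod _ (by fun_prop)]
  exact lintegral_congr fun z => lintegral_ofReal_ite_mul_bce_eq_lintegral_condCDF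
    hX hT hV hig he heX he01 t z (by fun_prop) fun x => hg01 (z, x)

theorem groupEntropy_le_groupLoss_and_ae_eq_condCDF (hX : Measurable X) (hT : Measurable T)
    {Y V Z : Ω → ℝ} (hV : Measurable V) (hZ : Measurable Z) {t : Bool}
    (hcons : ∀ ω, T ω = t → Y ω = V ω) (hig : CondIndepFun (m𝓧.comap X) hX.comap_le V T P)
    (hindep : IndepFun (fun ω => (X ω, T ω, V ω)) Z P) (he : Measurable e)
    (heX : P[fun ω => (if T ω then (1 : ℝ) else 0) | m𝓧.comap X] =ᵐ[P] fun ω => e (X ω))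
    (he01 : ∀ᵐ x ∂(P.map X), e x ∈ Ioo (0 : ℝ) 1) {g : ℝ × 𝓧 → ℝ} (hg : Measurable g)
    (hg01 : ∀ p, g p ∈ Ioo (0 : ℝ) 1) :
    groupEntropy P X T Z t (fun x z => condCDF (P.map fun ω => (X ω, V ω)) x z)
        ≤ groupLoss P X T Y Z t g
      ∧ (groupEntropy P X T Z t (fun x z => condCDF (P.map fun ω => (X ω, V ω)) x z) ≠ ⊤ →
          groupLoss P X T Y Z t g
            ≤ groupEntropy P X T Z t (fun x z => condCDF (P.map fun ω => (X ω, V ω)) x z) →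
          ∀ᵐ p ∂((P.map Z).prod (P.map X)), g p = condCDF (P.map fun ω => (X ω, V ω)) p.2 p.1) := by
  have he01' : ∀ᵐ x ∂(P.map X), e x ∈ Icc (0 : ℝ) 1 := he01.mono fun _ hx => Ioo_subset_Icc_self hx
  have hindep' : IndepFun (fun ω => (X ω, T ω)) Z P :=
    hindep.comp (by fun_prop : Measurable fun w : 𝓧 × Bool × ℝ => (w.1, w.2.1)) measurable_id
  have hweight : ∀ᵐ p ∂((P.map Z).prod (P.map X)), 0 < armPropensity e t p.2 :=
    Measure.quasiMeasurePreserving_snd.ae (he01.mono fun x hx => armPropensity_pos hx t)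
  have hF01 : ∀ p : ℝ × 𝓧, condCDF (P.map fun ω => (X ω, V ω)) p.2 p.1 ∈ Icc (0 : ℝ) 1 :=
    fun p => ⟨condCDF_nonneg _ _ _, condCDF_le_one _ _ _⟩
  rw [groupLoss_eq_lintegral_prod hX hT hV hZ hcons hig hindep he heX he01' hg hg01,
    groupEntropy_eq_lintegral_prod hX hT hZ hindep' he heX he01' t (by fun_prop)]
  exact ⟨lintegral_mono_ae <| ofReal_mul_binEntropy'_ae_le_ofReal_mul_bce
      (hweight.mono fun _ => le_of_lt) hF01 hg01,
    ae_eq_of_lintegral_bce_le_lintegral_binEntropy' (by fun_prop) (by fun_prop) hg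
      hweight hF01 hg01⟩

end Arm

theorem ccn_gloss_optimal_general
    {𝓧 : Type*} [MeasurableSpace 𝓧]
    {Ω : Type*} [MeasurableSpace Ω] [StandardBorelSpace Ω]
    (P : Measure Ω) [IsProbabilityMeasure P]
    (X : Ω → 𝓧) (T : Ω → Bool) (Y₀ Y₁ Y Z : Ω → ℝ)
    (hX : Measurable X) (hT : Measurable T) (hY₀ : Measurable Y₀) (hY₁ : Measurable Y₁)
    (hZ : Measurable Z)
    -- consistency: the observed outcome is the potential outcome of the assigned treatment
    (hcons : ∀ ω, Y ω = if T ω then Y₁ ω else Y₀ ω)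
    -- ignorability: (Y₀, Y₁) ⫫ T | σ(X)
    (hig : CondIndepFun (MeasurableSpace.comap X inferInstance) hX.comap_le
      (fun ω => (Y₀ ω, Y₁ ω)) T P)
    -- positivity
    (e : 𝓧 → ℝ) (he : Measurable e)
    (heX : P[fun ω => (if T ω then (1 : ℝ) else 0) |
        MeasurableSpace.comap X inferInstance] =ᵐ[P] fun ω => e (X ω))
    (he01 : ∀ᵐ x ∂(P.map X), e x ∈ Set.Ioo (0 : ℝ) 1)
    -- Z independent of (X, T, Y₀, Y₁)
    (hindep : IndepFun (fun ω => (X ω, T ω, Y₀ ω, Y₁ ω)) Z P) :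
    ∀ g₀ g₁ : ℝ × 𝓧 → ℝ, Measurable g₀ → Measurable g₁ →
      (∀ p, g₀ p ∈ Set.Ioo (0 : ℝ) 1) → (∀ p, g₁ p ∈ Set.Ioo (0 : ℝ) 1) →
      (groupLoss P X T Y Z false g₀ + groupLoss P X T Y Z true g₁
          ≥ groupEntropy P X T Z false (fun x z => condCDF (P.map fun ω => (X ω, Y₀ ω)) x z)
            + groupEntropy P X T Z true (fun x z => condCDF (P.map fun ω => (X ω, Y₁ ω)) x z))
      ∧ (groupEntropy P X T Z false (fun x z => condCDF (P.map fun ω => (X ω, Y₀ ω)) x z)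
            + groupEntropy P X T Z true (fun x z => condCDF (P.map fun ω => (X ω, Y₁ ω)) x z) ≠ ⊤ →
          groupLoss P X T Y Z false g₀ + groupLoss P X T Y Z true g₁
            = groupEntropy P X T Z false (fun x z => condCDF (P.map fun ω => (X ω, Y₀ ω)) x z)
              + groupEntropy P X T Z true (fun x z => condCDF (P.map fun ω => (X ω, Y₁ ω)) x z) →
          (∀ᵐ p ∂((P.map Z).prod (P.map X)),
              g₀ p = condCDF (P.map fun ω => (X ω, Y₀ ω)) p.2 p.1)
            ∧ ∀ᵐ p ∂((P.map Z).prod (P.map X)),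
                g₁ p = condCDF (P.map fun ω => (X ω, Y₁ ω)) p.2 p.1) := by
  intro g₀ g₁ hg₀ hg₁ hg₀01 hg₁01
  obtain ⟨hle₀, hopt₀⟩ := groupEntropy_le_groupLoss_and_ae_eq_condCDF hX hT hY₀ hZ
    (Y := Y) (t := false) (fun ω ht => by simp [hcons ω, ht])
    (hig.comp measurable_fst measurable_id)
    (hindep.comp (by fun_prop : Measurable fun w : 𝓧 × Bool × ℝ × ℝ => (w.1, w.2.1, w.2.2.1))
      measurable_id) he heX he01 hg₀ hg₀01
  obtain ⟨hle₁, hopt₁⟩ := groupEntropy_le_groupLoss_and_ae_eq_condCDF hX hT hY₁ hZ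
    (Y := Y) (t := true) (fun ω ht => by simp [hcons ω, ht])
    (hig.comp measurable_snd measurable_id)
    (hindep.comp (by fun_prop : Measurable fun w : 𝓧 × Bool × ℝ × ℝ => (w.1, w.2.1, w.2.2.2))
      measurable_id) he heX he01 hg₁ hg₁01
  refine ⟨add_le_add hle₀ hle₁, fun hfin heq => ?_⟩
  obtain ⟨hge₀, hge₁⟩ := ENNReal.le_and_le_of_add_eq_add hle₀ hle₁ hfin heq
  obtain ⟨hfin₀, hfin₁⟩ := ENNReal.add_ne_top.mp hfin
  exact ⟨hopt₀ hfin₀ hge₀, hopt₁ hfin₁ hge₁⟩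

/-- (Proposition 1: Optimal solution for `g₀` and `g₁`.) Under consistency
(`Y = Y₁` on `{T = 1}`, `Y = Y₀` on `{T = 0}`), ignorability (`(Y₀, Y₁)` conditionally
independent of `T` given `σ(X)`), positivity (a measurable propensity
`e` with `P(T = 1 | X) = e(X)` a.s. and `0 < e(x) < 1` for `μ_X`-a.e. `x`), and `Z`
independent of `(X, T, Y₀, Y₁)` with law `ν = P.map Z`: for all jointly measurable
`g₀, g₁ : ℝ × 𝒳 → (0,1)`,
`g-loss*(g₀, g₁) ≥ E[1_{T=0}·H(F₀(X, Z))] + E[1_{T=1}·H(F₁(X, Z))]`,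
and any pair attaining this (finite) infimum satisfies `g₀(z, x) = F₀(x, z)` and
`g₁(z, x) = F₁(x, z)` for `ν ⊗ μ_X`-a.e. `(z, x)` — on the full covariate distribution. -/
theorem ccn_gloss_optimal
    {𝓧 : Type*} [MeasurableSpace 𝓧] [StandardBorelSpace 𝓧]
    {Ω : Type*} [MeasurableSpace Ω] [StandardBorelSpace Ω] [Nonempty Ω]
    (P : Measure Ω) [IsProbabilityMeasure P]
    (X : Ω → 𝓧) (T : Ω → Bool) (Y₀ Y₁ Y Z : Ω → ℝ)
    (hX : Measurable X) (hT : Measurable T) (hY₀ : Measurable Y₀) (hY₁ : Measurable Y₁)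
    (hZ : Measurable Z)
    -- consistency: the observed outcome is the potential outcome of the assigned treatment
    (hcons : ∀ ω, Y ω = if T ω then Y₁ ω else Y₀ ω)
    -- ignorability: (Y₀, Y₁) ⫫ T | σ(X)
    (hig : CondIndepFun (MeasurableSpace.comap X inferInstance) hX.comap_le
      (fun ω => (Y₀ ω, Y₁ ω)) T P)
    -- positivity
    (e : 𝓧 → ℝ) (he : Measurable e)
    (heX : P[fun ω => (if T ω then (1 : ℝ) else 0) |
        MeasurableSpace.comap X inferInstance] =ᵐ[P] fun ω => e (X ω))
    (he01 : ∀ᵐ x ∂(P.map X), e x ∈ Set.Ioo (0 : ℝ) 1)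
    -- Z independent of (X, T, Y₀, Y₁)
    (hindep : IndepFun (fun ω => (X ω, T ω, Y₀ ω, Y₁ ω)) Z P) :
    ∀ g₀ g₁ : ℝ × 𝓧 → ℝ, Measurable g₀ → Measurable g₁ →
      (∀ p, g₀ p ∈ Set.Ioo (0 : ℝ) 1) → (∀ p, g₁ p ∈ Set.Ioo (0 : ℝ) 1) →
      (groupLoss P X T Y Z false g₀ + groupLoss P X T Y Z true g₁
          ≥ groupEntropy P X T Z false (fun x z => condCDF (P.map fun ω => (X ω, Y₀ ω)) x z)
            + groupEntropy P X T Z true (fun x z => condCDF (P.map fun ω => (X ω, Y₁ ω)) x z))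
      ∧ (groupEntropy P X T Z false (fun x z => condCDF (P.map fun ω => (X ω, Y₀ ω)) x z)
            + groupEntropy P X T Z true (fun x z => condCDF (P.map fun ω => (X ω, Y₁ ω)) x z) ≠ ⊤ →
          groupLoss P X T Y Z false g₀ + groupLoss P X T Y Z true g₁
            = groupEntropy P X T Z false (fun x z => condCDF (P.map fun ω => (X ω, Y₀ ω)) x z)
              + groupEntropy P X T Z true (fun x z => condCDF (P.map fun ω => (X ω, Y₁ ω)) x z) →
          (∀ᵐ p ∂((P.map Z).prod (P.map X)),
              g₀ p = condCDF (P.map fun ω => (X ω, Y₀ ω)) p.2 p.1)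
            ∧ ∀ᵐ p ∂((P.map Z).prod (P.map X)),
                g₁ p = condCDF (P.map fun ω => (X ω, Y₁ ω)) p.2 p.1) :=
  ccn_gloss_optimal_general P X T Y₀ Y₁ Y Z hX hT hY₀ hY₁ hZ hcons hig e he heX he01 hindep
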